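/- For a graph on n nodes sampled from depth-k MFNG W_k(P,ℓ), the probability that three fixed distinct nodes form a triangle is (Σ_{i,j,t ∈ [m]} p_{ij} p_{it} p_{jt} ℓ_i ℓ_j ℓ_t)^k, and thus the expected number of triangles is C(n,3) times this quantity. -/

import Mathlib

/-!
Colour each node independently at each of the `k` levels of the Kronecker product, with law `l`.
The edge events at different levels are independent, so the probability of any fixed set of edges
is the `k`-th power of its probability at a single level. At one level only the colours of the
three triangle nodes matter; summing out the colours of all the other nodes leaves the triple sum.
Each of the `C(n,3)` node triples has this same triangle probability.
-/

open Finset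

/-- Probability under depth-`k` MFNG `W_k(P,l)` on `n` nodes that all pairs
in `S` are edges. -/
noncomputable def probSubset (m n k : ℕ) (P : Fin m → Fin m → ℝ)
    (l : Fin m → ℝ) (S : Finset (Fin n × Fin n)) : ℝ :=
  ∑ c : Fin n → Fin k → Fin m,
    (∏ u, ∏ r, l (c u r)) * ∏ p ∈ S, ∏ r, P (c p.1 r) (c p.2 r)

theorem sum_prod_mul_comp_eq_of_injective {ι α κ R : Type*} [Fintype ι] [DecidableEq ι]
    [Fintype α] [DecidableEq α] [Fintype κ] [CommSemiring R] {l : κ → R} (hl : ∑ c, l c = 1)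
    {e : α → ι} (he : Function.Injective e) (g : (α → κ) → R) :
    ∑ d : ι → κ, (∏ x, l (d x)) * g (d ∘ e) = ∑ a : α → κ, (∏ y, l (a y)) * g a := by
  let E : α ⊕ ↥(Set.range e)ᶜ ≃ ι :=
    (Equiv.sumCongr (Equiv.ofInjective e he) (Equiv.refl _)).trans (Equiv.Set.sumCompl _)
  let F := (Equiv.sumArrowEquivProdArrow _ _ κ).symm.trans (E.arrowCongr (Equiv.refl κ))
  have hF_range : ∀ a b y, F (a, b) (e y) = a y := fun a b y => by
    change Sum.elim a b (E.symm (E (Sum.inl y))) = a y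
    rw [E.symm_apply_apply, Sum.elim_inl]
  have hF_compl : ∀ a b (z : ↥(Set.range e)ᶜ), F (a, b) z = b z := fun a b z => by
    change Sum.elim a b (E.symm (E (Sum.inr z))) = b z
    rw [E.symm_apply_apply, Sum.elim_inr]
  have hprod : ∀ d : ι → κ,
      ∏ x, l (d x) = (∏ y, l (d (e y))) * ∏ z : ↥(Set.range e)ᶜ, l (d z) := fun d => by
    rw [← E.prod_comp, Fintype.prod_sum_type]
    rfl
  have hcompl : ∑ b : ↥(Set.range e)ᶜ → κ, ∏ z, l (b z) = 1 := by
    rw [← Fintype.prod_sum, Finset.prod_eq_one fun _ _ => hl]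
  rw [← F.sum_comp, Fintype.sum_prod_type]
  refine Fintype.sum_congr _ _ fun a => ?_
  have hcomp : ∀ b, F (a, b) ∘ e = a := fun b => funext (hF_range a b)
  simp only [hprod, hF_range, hF_compl, hcomp]
  rw [← Finset.sum_mul, ← Finset.mul_sum, hcompl, mul_one]

theorem sum_fin_three_pi {κ R : Type*} [Fintype κ] [AddCommMonoid R] (F : (Fin 3 → κ) → R) :
    ∑ a, F a = ∑ i, ∑ j, ∑ t, F ![i, j, t] := by
  simp only [← (Fin.consEquiv fun _ => κ).sum_comp, Fintype.sum_prod_type, Fintype.sum_unique]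
  rfl

theorem Finset.exists_lt_lt_eq_of_card_eq_three {α : Type*} [LinearOrder α] {T : Finset α}
    (hT : T.card = 3) : ∃ u v w, u < v ∧ v < w ∧ T = {u, v, w} := by
  let f := T.orderEmbOfFin hT
  refine ⟨f 0, f 1, f 2, f.strictMono (by decide), f.strictMono (by decide), ?_⟩
  ext x
  rw [← Finset.mem_coe, ← T.range_orderEmbOfFin hT, Set.mem_range, Fin.exists_fin_succ]
  simp [Fin.exists_fin_succ, eq_comm, f]

theorem Finset.filter_lt_product_triple {α : Type*} [LinearOrder α] {u v w : α}
    (huv : u < v) (hvw : v < w) :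
    (({u, v, w} : Finset α) ×ˢ {u, v, w}).filter (fun p => p.1 < p.2)
      = {(u, v), (u, w), (v, w)} := by
  ext ⟨x, y⟩
  simp only [mem_filter, mem_product, mem_insert, mem_singleton, Prod.mk.injEq]
  grind

noncomputable def levelProb (m n : ℕ) (P : Fin m → Fin m → ℝ) (l : Fin m → ℝ)
    (S : Finset (Fin n × Fin n)) : ℝ :=
  ∑ d : Fin n → Fin m, (∏ u, l (d u)) * ∏ p ∈ S, P (d p.1) (d p.2)

theorem probSubset_eq_levelProb_pow (m n k : ℕ) (P : Fin m → Fin m → ℝ) (l : Fin m → ℝ)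
    (S : Finset (Fin n × Fin n)) :
    probSubset m n k P l S = levelProb m n P l S ^ k := by
  rw [levelProb, Fintype.sum_pow, probSubset]
  refine Fintype.sum_equiv (Equiv.piComm fun _ _ => Fin m) _ _ fun c => ?_
  simp only [Equiv.piComm_apply, prod_mul_distrib]
  rw [prod_comm, prod_comm (s := S)]

theorem levelProb_triangle {m n : ℕ} (P : Fin m → Fin m → ℝ) {l : Fin m → ℝ}
    (hl : ∑ i, l i = 1) {u v w : Fin n} (huv : u ≠ v) (huw : u ≠ w) (hvw : v ≠ w) :
    levelProb m n P l {(u, v), (u, w), (v, w)}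
      = ∑ i, ∑ j, ∑ t, P i j * P i t * P j t * l i * l j * l t := by
  have he : Function.Injective ![u, v, w] := by
    intro a b hab
    fin_cases a <;> fin_cases b <;> simp_all [eq_comm]
  let g : (Fin 3 → Fin m) → ℝ := fun a => P (a 0) (a 1) * P (a 0) (a 2) * P (a 1) (a 2)
  have hpairs : ∀ d : Fin n → Fin m,
      ∏ p ∈ {(u, v), (u, w), (v, w)}, P (d p.1) (d p.2) = g (d ∘ ![u, v, w]) := fun d => by
    rw [prod_insert (by simp [huv, hvw]), prod_insert (by simp [huv]), prod_singleton, ← mul_assoc]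
    rfl
  calc levelProb m n P l {(u, v), (u, w), (v, w)}
      = ∑ d : Fin n → Fin m, (∏ x, l (d x)) * g (d ∘ ![u, v, w]) := by
        simp only [levelProb, hpairs]
    _ = ∑ a : Fin 3 → Fin m, (∏ y, l (a y)) * g a := sum_prod_mul_comp_eq_of_injective hl he g
    _ = ∑ i, ∑ j, ∑ t, P i j * P i t * P j t * l i * l j * l t := by
        rw [sum_fin_three_pi]
        refine sum_congr rfl fun i _ => sum_congr rfl fun j _ => sum_congr rfl fun t _ => ?_
        rw [Fin.prod_univ_three]
        change l i * l j * l t * (P i j * P i t * P j t) = _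
        ring

theorem mfng_triangle_prob_and_expected_triangles_general (m n k : ℕ)
    (P : Fin m → Fin m → ℝ)
    (l : Fin m → ℝ) (hl1 : ∑ i, l i = 1) :
    (∀ u v w : Fin n, u ≠ v → u ≠ w → v ≠ w →
        probSubset m n k P l {(u, v), (u, w), (v, w)}
          = (∑ i, ∑ j, ∑ t, P i j * P i t * P j t * l i * l j * l t) ^ k) ∧
    (∑ T ∈ (univ : Finset (Fin n)).powersetCard 3,
        probSubset m n k P l ((T ×ˢ T).filter fun p => p.1 < p.2)
      = (n.choose 3 : ℝ) *
          (∑ i, ∑ j, ∑ t, P i j * P i t * P j t * l i * l j * l t) ^ k) := by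
  have triangle : ∀ u v w : Fin n, u ≠ v → u ≠ w → v ≠ w →
      probSubset m n k P l {(u, v), (u, w), (v, w)}
        = (∑ i, ∑ j, ∑ t, P i j * P i t * P j t * l i * l j * l t) ^ k :=
    fun u v w huv huw hvw => by
      rw [probSubset_eq_levelProb_pow, levelProb_triangle P hl1 huv huw hvw]
  refine ⟨triangle, ?_⟩
  have each : ∀ T ∈ (univ : Finset (Fin n)).powersetCard 3,
      probSubset m n k P l ((T ×ˢ T).filter fun p => p.1 < p.2)
        = (∑ i, ∑ j, ∑ t, P i j * P i t * P j t * l i * l j * l t) ^ k := fun T hT => by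
    obtain ⟨u, v, w, huv, hvw, rfl⟩ :=
      exists_lt_lt_eq_of_card_eq_three (mem_powersetCard.mp hT).2
    rw [filter_lt_product_triple huv hvw]
    exact triangle u v w huv.ne (huv.trans hvw).ne hvw.ne
  rw [sum_congr rfl each, sum_const, card_powersetCard, card_univ, Fintype.card_fin, nsmul_eq_mul]

/-- three fixed distinct nodes form a triangle with
probability `(∑ i j t, p_{ij} p_{it} p_{jt} l_i l_j l_t) ^ k`, and the
expected number of triangles is `C(n,3)` times this quantity. -/
theorem mfng_triangle_prob_and_expected_triangles (m n k : ℕ)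
    (P : Fin m → Fin m → ℝ)
    (hsymm : ∀ i j, P i j = P j i)
    (hP0 : ∀ i j, 0 ≤ P i j) (hP1 : ∀ i j, P i j ≤ 1)
    (l : Fin m → ℝ) (hl0 : ∀ i, 0 ≤ l i) (hl1 : ∑ i, l i = 1) :
    (∀ u v w : Fin n, u ≠ v → u ≠ w → v ≠ w →
        probSubset m n k P l {(u, v), (u, w), (v, w)}
          = (∑ i, ∑ j, ∑ t, P i j * P i t * P j t * l i * l j * l t) ^ k) ∧
    (∑ T ∈ (univ : Finset (Fin n)).powersetCard 3,
        probSubset m n k P l ((T ×ˢ T).filter fun p => p.1 < p.2)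
      = (n.choose 3 : ℝ) *
          (∑ i, ∑ j, ∑ t, P i j * P i t * P j t * l i * l j * l t) ^ k) :=
  mfng_triangle_prob_and_expected_triangles_general m n k P l hl1
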